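/- arXiv:2406.11541 — 3 statements merged into one kernel-verified Lean document; each statement's English description precedes it below -/
import Mathlib

section
/- Let n ≥ 1 and let Ω ⊆ ℝⁿ be an open set with finite positive Lebesgue measure. Let g₁, g₂ : Ω → Sym(n,ℝ) be continuous maps into the real symmetric n×n matrices such that g₁(x) and g₂(x) are positive definite for every x ∈ Ω and g₁(x) − g₂(x) is positive semidefinite for every x ∈ Ω (i.e. g₁ ≥ g₂ as quadratic forms). If ∫_Ω √(det g₁(x)) dx = ∫_Ω √(det g₂(x)) dx < ∞, then g₁(x) = g₂(x) for every x ∈ Ω. -/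
/-!
If `A ≤ B` with `A` positive definite, write `A = Cᴴ C`; then `B = Cᴴ (1 + Q) C` with `Q ⪰ 0`, so
`det B = det A · ∏ (1 + λᵢ(Q)) ≥ det A`, with equality only if `Q = 0`, i.e. `B = A`. Hence
`√(det g₁) - √(det g₂)` is a nonnegative continuous function on `Ω` with integral zero, so it
vanishes on the open set `Ω`, and the equality case gives `g₁ = g₂` pointwise.
-/

open MeasureTheory Set
open scoped MatrixOrder

namespace Matrix

variable {ι : Type*} [Fintype ι] [DecidableEq ι] {A B Q : Matrix ι ι ℝ}

lemma IsHermitian.det_one_add (hQ : Q.IsHermitian) :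
    (1 + Q).det = ∏ i, (1 + hQ.eigenvalues i) := by
  conv_lhs => rw [hQ.spectral_theorem, ← map_one (Unitary.conjStarAlgAut ℝ _ _), ← map_add,
    Unitary.conjStarAlgAut_apply, ← diagonal_one, diagonal_add]
  rw [det_mul_right_comm, Unitary.mul_star_self_of_mem hQ.eigenvectorUnitary.2, one_mul,
    det_diagonal]
  rfl

lemma PosSemidef.one_le_det_one_add (hQ : Q.PosSemidef) : 1 ≤ (1 + Q).det := by
  rw [hQ.1.det_one_add]
  exact Finset.one_le_prod fun i _ ↦ le_add_of_nonneg_right (hQ.eigenvalues_nonneg i)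

lemma PosSemidef.det_one_add_eq_one_iff (hQ : Q.PosSemidef) : (1 + Q).det = 1 ↔ Q = 0 := by
  refine ⟨fun h ↦ ?_, by rintro rfl; simp⟩
  rw [← hQ.1.eigenvalues_eq_zero_iff]
  by_contra hne
  obtain ⟨j, hj⟩ := Function.ne_iff.mp hne
  have : ∏ _i : ι, (1 : ℝ) < (1 + Q).det := by
    rw [hQ.1.det_one_add]
    refine Finset.prod_lt_prod (fun _ _ ↦ one_pos) (fun i _ ↦ ?_) ⟨j, Finset.mem_univ j, ?_⟩
    · exact le_add_of_nonneg_right (hQ.eigenvalues_nonneg i)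
    · exact lt_add_of_pos_right 1 ((hQ.eigenvalues_nonneg j).lt_of_ne' hj)
  simp [h] at this

-- `Q = (C⁻¹)ᴴ (B - A) C⁻¹` for any factorization `A = Cᴴ C`.
lemma PosDef.exists_det_eq_det_mul_det_one_add (hA : A.PosDef) (hAB : A ≤ B) :
    ∃ Q : Matrix ι ι ℝ, Q.PosSemidef ∧ (Q = 0 ↔ B = A) ∧ B.det = A.det * (1 + Q).det := by
  obtain ⟨C, rfl⟩ := CStarAlgebra.nonneg_iff_eq_star_mul_self.mp hA.posSemidef.nonneg
  have hC : IsUnit C.det := by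
    rw [isUnit_iff_ne_zero]
    intro h
    simpa [h] using hA.det_pos
  set Q := (C⁻¹)ᴴ * (B - star C * C) * C⁻¹ with hQ_def
  have hBA : B - star C * C = Cᴴ * Q * C := by
    have hC_star : IsUnit Cᴴ.det := by rwa [det_conjTranspose, star_trivial]
    rw [hQ_def, conjTranspose_nonsing_inv, Matrix.mul_assoc, Matrix.mul_assoc, nonsing_inv_mul _ hC,
      Matrix.mul_one, mul_nonsing_inv_cancel_left _ _ hC_star]
  refine ⟨Q, hAB.conjTranspose_mul_mul_same _, ⟨fun hQ ↦ ?_, fun hB ↦ by simp [Q, hB]⟩, ?_⟩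
  · rw [← sub_eq_zero, hBA, hQ, Matrix.mul_zero, Matrix.zero_mul]
  · have hB : B = Cᴴ * (1 + Q) * C := by
      rw [Matrix.mul_add, Matrix.add_mul, Matrix.mul_one, ← hBA, star_eq_conjTranspose,
        add_sub_cancel]
    rw [hB, star_eq_conjTranspose, det_mul, det_mul, det_mul]
    ring

lemma PosDef.det_le_det (hA : A.PosDef) (hAB : A ≤ B) : A.det ≤ B.det := by
  obtain ⟨Q, hQ, -, hdet⟩ := hA.exists_det_eq_det_mul_det_one_add hAB
  rw [hdet]
  exact le_mul_of_one_le_right hA.det_pos.le hQ.one_le_det_one_add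

lemma PosDef.det_eq_det_iff (hA : A.PosDef) (hAB : A ≤ B) : B.det = A.det ↔ B = A := by
  obtain ⟨Q, hQ, hQ_eq, hdet⟩ := hA.exists_det_eq_det_mul_det_one_add hAB
  rw [hdet, mul_eq_left₀ hA.det_pos.ne', hQ.det_one_add_eq_one_iff, hQ_eq]

end Matrix

lemma IsOpen.eqOn_zero_of_setIntegral_eq_zero {X : Type*} [TopologicalSpace X] [MeasurableSpace X]
    [OpensMeasurableSpace X] {μ : Measure X} [μ.IsOpenPosMeasure] {U : Set X} {f : X → ℝ}
    (hU : IsOpen U) (hf : ContinuousOn f U) (hf_nonneg : ∀ x ∈ U, 0 ≤ f x)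
    (hf_int : IntegrableOn f U μ) (h : ∫ x in U, f x ∂μ = 0) : EqOn f 0 U :=
  Measure.eqOn_open_of_ae_eq
    ((setIntegral_eq_zero_iff_of_nonneg_ae (ae_restrict_of_forall_mem hU.measurableSet hf_nonneg)
      hf_int).mp h) hU hf continuousOn_const

theorem rigidity_volume_above_distance_below_general {n : ℕ}
    (Ω : Set (EuclideanSpace ℝ (Fin n))) (hΩopen : IsOpen Ω)
    (g₁ g₂ : EuclideanSpace ℝ (Fin n) → Matrix (Fin n) (Fin n) ℝ)
    (hc₁ : ContinuousOn g₁ Ω) (hc₂ : ContinuousOn g₂ Ω)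
    (hpd₂ : ∀ x ∈ Ω, (g₂ x).PosDef)
    (hle : ∀ x ∈ Ω, (g₁ x - g₂ x).PosSemidef)
    (hint₁ : IntegrableOn (fun x => Real.sqrt (g₁ x).det) Ω volume)
    (hint₂ : IntegrableOn (fun x => Real.sqrt (g₂ x).det) Ω volume)
    (heq : ∫ x in Ω, Real.sqrt (g₁ x).det = ∫ x in Ω, Real.sqrt (g₂ x).det) :
    ∀ x ∈ Ω, g₁ x = g₂ x := by
  have hdet_le : ∀ x ∈ Ω, (g₂ x).det ≤ (g₁ x).det := fun x hx ↦ (hpd₂ x hx).det_le_det (hle x hx)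
  have hsqrt_eq : EqOn (fun x ↦ √(g₁ x).det - √(g₂ x).det) 0 Ω :=
    hΩopen.eqOn_zero_of_setIntegral_eq_zero
      ((continuous_id.matrix_det.comp_continuousOn hc₁).sqrt.sub
        (continuous_id.matrix_det.comp_continuousOn hc₂).sqrt)
      (fun x hx ↦ sub_nonneg.mpr (Real.sqrt_le_sqrt (hdet_le x hx)))
      (hint₁.sub hint₂) (by rw [integral_sub hint₁ hint₂, heq, sub_self])
  intro x hx
  have hdet₂ : 0 ≤ (g₂ x).det := (hpd₂ x hx).det_pos.le
  refine ((hpd₂ x hx).det_eq_det_iff (hle x hx)).mp ?_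
  exact (Real.sqrt_inj (hdet₂.trans (hdet_le x hx)) hdet₂).mp (sub_eq_zero.mp (hsqrt_eq hx))

/-- Rigidity in local coordinates: if two continuous fields of positive definite symmetric
matrices on an open set `Ω ⊆ ℝⁿ` of finite positive measure satisfy `g₁ ≥ g₂` (i.e.
`g₁ x - g₂ x` is positive semidefinite) and have equal (finite) Riemannian volumes
`∫_Ω √(det gᵢ)`, then `g₁ = g₂` on `Ω`. -/
theorem rigidity_volume_above_distance_below {n : ℕ} (hn : 1 ≤ n)
    (Ω : Set (EuclideanSpace ℝ (Fin n))) (hΩopen : IsOpen Ω)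
    (hΩpos : 0 < volume Ω) (hΩfin : volume Ω < ⊤)
    (g₁ g₂ : EuclideanSpace ℝ (Fin n) → Matrix (Fin n) (Fin n) ℝ)
    (hc₁ : ContinuousOn g₁ Ω) (hc₂ : ContinuousOn g₂ Ω)
    (hsym₁ : ∀ x ∈ Ω, (g₁ x).IsSymm) (hsym₂ : ∀ x ∈ Ω, (g₂ x).IsSymm)
    (hpd₁ : ∀ x ∈ Ω, (g₁ x).PosDef) (hpd₂ : ∀ x ∈ Ω, (g₂ x).PosDef)
    (hle : ∀ x ∈ Ω, (g₁ x - g₂ x).PosSemidef)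
    (hint₁ : IntegrableOn (fun x => Real.sqrt (g₁ x).det) Ω volume)
    (hint₂ : IntegrableOn (fun x => Real.sqrt (g₂ x).det) Ω volume)
    (heq : ∫ x in Ω, Real.sqrt (g₁ x).det = ∫ x in Ω, Real.sqrt (g₂ x).det) :
    ∀ x ∈ Ω, g₁ x = g₂ x :=
  rigidity_volume_above_distance_below_general Ω hΩopen g₁ g₂ hc₁ hc₂ hpd₂ hle hint₁ hint₂ heq
end

section
/- Let n ≥ 1 and 0 < α < 1/n. Let B̄ ⊂ ℝⁿ denote the closed unit ball. For each integer j ≥ 3, let f_j : B̄ → ℝ be a continuous function satisfying: 1 ≤ f_j(x) ≤ j^α for all x ∈ B̄; f_j(x) = j^α whenever ‖x‖ ≥ 1 − 1/j; and f_j(x) = 1 whenever ‖x‖ ≤ 1 − 2/j. Then for all j and all p, q ∈ B̄, the conformal distance satisfies d_{f_j}^{B̄}(p,q) ≤ 6. -/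
open MeasureTheory Set Filter
open scoped ENNReal

noncomputable section

/-- A path `γ : [0,1] → ℝⁿ` is piecewise `C¹` if it is continuous on `[0,1]` and, away from a
finite set of break points, differentiable with continuous derivative. -/
def PiecewiseC1 {n : ℕ} (γ : ℝ → EuclideanSpace ℝ (Fin n)) : Prop :=
  ContinuousOn γ (Set.Icc 0 1) ∧
    ∃ s : Finset ℝ,
      (∀ t ∈ Set.Icc (0 : ℝ) 1 \ (s : Set ℝ), DifferentiableAt ℝ γ t) ∧
      ContinuousOn (deriv γ) (Set.Icc (0 : ℝ) 1 \ (s : Set ℝ))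

/-- `γ` is an admissible path in `Ω` from `p` to `q`: piecewise `C¹`, taking values in `Ω`,
starting at `p` and ending at `q`. -/
def IsPathIn {n : ℕ} (Ω : Set (EuclideanSpace ℝ (Fin n))) (p q : EuclideanSpace ℝ (Fin n))
    (γ : ℝ → EuclideanSpace ℝ (Fin n)) : Prop :=
  PiecewiseC1 γ ∧ (∀ t ∈ Set.Icc (0 : ℝ) 1, γ t ∈ Ω) ∧ γ 0 = p ∧ γ 1 = q

/-- The `f`-length of a path: `L_f(γ) = ∫₀¹ f(γ(t)) ‖γ'(t)‖ dt`. -/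
def pathLen {n : ℕ} (f : EuclideanSpace ℝ (Fin n) → ℝ) (γ : ℝ → EuclideanSpace ℝ (Fin n)) : ℝ :=
  ∫ t in (0 : ℝ)..1, f (γ t) * ‖deriv γ t‖

/-- The conformal distance `d_f^Ω(p,q)`: the infimum of `f`-lengths of piecewise `C¹` paths in
`Ω` from `p` to `q` (equal to `∞` when no such path exists). -/
def confDist {n : ℕ} (Ω : Set (EuclideanSpace ℝ (Fin n))) (f : EuclideanSpace ℝ (Fin n) → ℝ)
    (p q : EuclideanSpace ℝ (Fin n)) : ℝ≥0∞ :=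
  ⨅ (γ : ℝ → EuclideanSpace ℝ (Fin n)) (_ : IsPathIn Ω p q γ), ENNReal.ofReal (pathLen f γ)

/-!
Join `p` and `q` by the two radii through the origin. Along a radius the factor `f_j` is `1`
except on the collar `‖x‖ > 1 - 2/j`, of width `2/j`, where it is at most `j ^ α ≤ j`; so each
radius has `f_j`-length at most `1 + j ^ α * (2/j) ≤ 3`.
-/

theorem confDist_le_pathLen {n : ℕ} {Ω : Set (EuclideanSpace ℝ (Fin n))}
    {f : EuclideanSpace ℝ (Fin n) → ℝ} {p q : EuclideanSpace ℝ (Fin n)}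
    {γ : ℝ → EuclideanSpace ℝ (Fin n)} (hγ : IsPathIn Ω p q γ) :
    confDist Ω f p q ≤ ENNReal.ofReal (pathLen f γ) :=
  iInf₂_le γ hγ

theorem intervalIntegral_le_of_le_on_Icc_of_le_on_Icc {g : ℝ → ℝ} {a b c A B : ℝ}
    (hac : a ≤ c) (hcb : c ≤ b) (hg : ContinuousOn g (Icc a b))
    (hA : ∀ t ∈ Icc a c, g t ≤ A) (hB : ∀ t ∈ Icc c b, g t ≤ B) :
    ∫ t in a..b, g t ≤ A * (c - a) + B * (b - c) := by
  have hac' : IntervalIntegrable g volume a c :=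
    (hg.mono (Icc_subset_Icc le_rfl hcb)).intervalIntegrable_of_Icc hac
  have hcb' : IntervalIntegrable g volume c b :=
    (hg.mono (Icc_subset_Icc hac le_rfl)).intervalIntegrable_of_Icc hcb
  have h₁ : ∫ t in a..c, g t ≤ ∫ _ in a..c, A :=
    intervalIntegral.integral_mono_on hac hac' intervalIntegrable_const hA
  have h₂ : ∫ t in c..b, g t ≤ ∫ _ in c..b, B :=
    intervalIntegral.integral_mono_on hcb hcb' intervalIntegrable_const hB
  rw [← intervalIntegral.integral_add_adjacent_intervals hac' hcb']
  simp only [intervalIntegral.integral_const, smul_eq_mul] at h₁ h₂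
  linarith

section Radial

variable {E : Type*} [NormedAddCommGroup E] [NormedSpace ℝ E]

def radialLen (f : E → ℝ) (x : E) : ℝ :=
  ∫ s in (0 : ℝ)..1, f (s • x) * ‖x‖

theorem continuousOn_radialIntegrand {Ω : Set E} {f : E → ℝ} {x : E} (hΩ : StarConvex ℝ 0 Ω)
    (hf : ContinuousOn f Ω) (hx : x ∈ Ω) :
    ContinuousOn (fun s : ℝ => f (s • x) * ‖x‖) (Icc 0 1) :=
  (hf.comp (continuous_id.smul continuous_const).continuousOn
    fun _ hs => hΩ.smul_mem hx hs.1 hs.2).mul continuousOn_const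

theorem radialLen_le {f : E → ℝ} {x : E} {a r : ℝ}
    (hf : ContinuousOn f (Metric.closedBall 0 1)) (hx : ‖x‖ ≤ 1)
    (ha : 0 ≤ a) (hr₀ : 0 ≤ r) (hr₁ : r ≤ 1)
    (hle : ∀ y ∈ Metric.closedBall (0 : E) 1, f y ≤ a)
    (hinner : ∀ y ∈ Metric.closedBall (0 : E) r, f y ≤ 1) :
    radialLen f x ≤ r + a * (1 - r) := by
  have hnorm : ∀ s ∈ Icc (0 : ℝ) 1, ‖s • x‖ = s * ‖x‖ := fun s hs => by
    rw [norm_smul, Real.norm_of_nonneg hs.1]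
  have split : ∀ c, 0 ≤ c → c ≤ 1 → c * ‖x‖ ≤ r →
      radialLen f x ≤ ‖x‖ * (c - 0) + a * ‖x‖ * (1 - c) := by
    intro c hc₀ hc₁ hcr
    refine intervalIntegral_le_of_le_on_Icc_of_le_on_Icc hc₀ hc₁
      (continuousOn_radialIntegrand ((convex_closedBall 0 1).starConvex
        (Metric.mem_closedBall_self zero_le_one)) hf (mem_closedBall_zero_iff.2 hx)) ?_ ?_
    · intro s hs
      have hs' : s ∈ Icc (0 : ℝ) 1 := ⟨hs.1, hs.2.trans hc₁⟩
      have : f (s • x) ≤ 1 := hinner _ <| mem_closedBall_zero_iff.2 <| by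
        rw [hnorm s hs']; nlinarith [norm_nonneg x, hs.2]
      nlinarith [norm_nonneg x]
    · intro s hs
      have hs' : s ∈ Icc (0 : ℝ) 1 := ⟨hc₀.trans hs.1, hs.2⟩
      have : f (s • x) ≤ a := hle _ <| mem_closedBall_zero_iff.2 <| by
        rw [hnorm s hs']; nlinarith [norm_nonneg x, hs'.1, hs'.2]
      nlinarith [norm_nonneg x]
  rcases le_or_gt ‖x‖ r with hxr | hxr
  · have := split 1 zero_le_one le_rfl (by linarith)
    nlinarith
  · have hx₀ : 0 < ‖x‖ := hr₀.trans_lt hxr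
    have hc : r / ‖x‖ * ‖x‖ = r := div_mul_cancel₀ r hx₀.ne'
    have := split (r / ‖x‖) (by positivity) ((div_le_one hx₀).2 hxr.le) hc.le
    nlinarith

end Radial

section PathViaOrigin

variable {E : Type*} [NormedAddCommGroup E] [NormedSpace ℝ E] {p q : E}

def pathViaOrigin (p q : E) (t : ℝ) : E :=
  if t ≤ 1 / 2 then (1 - 2 * t) • p else (2 * t - 1) • q

theorem continuous_pathViaOrigin : Continuous (pathViaOrigin p q) :=
  Continuous.if_le (by fun_prop) (by fun_prop) continuous_id continuous_const
    fun t ht => by simp [ht]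

theorem hasDerivAt_pathViaOrigin_of_lt {t : ℝ} (ht : t < 1 / 2) :
    HasDerivAt (pathViaOrigin p q) ((-2 : ℝ) • p) t := by
  have hlin : HasDerivAt (fun s : ℝ => 1 - 2 * s) (-2) t := by
    simpa using ((hasDerivAt_id t).const_mul (2 : ℝ)).const_sub 1
  refine (hlin.smul_const p).congr_of_eventuallyEq ?_
  filter_upwards [Iio_mem_nhds ht] with s hs
  exact if_pos (le_of_lt hs)

theorem hasDerivAt_pathViaOrigin_of_gt {t : ℝ} (ht : 1 / 2 < t) :
    HasDerivAt (pathViaOrigin p q) ((2 : ℝ) • q) t := by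
  have hlin : HasDerivAt (fun s : ℝ => 2 * s - 1) 2 t := by
    simpa using ((hasDerivAt_id t).const_mul (2 : ℝ)).sub_const 1
  refine (hlin.smul_const q).congr_of_eventuallyEq ?_
  filter_upwards [Ioi_mem_nhds ht] with s hs
  exact if_neg (not_le.2 hs)

theorem pathViaOrigin_mem {Ω : Set E} (hΩ : StarConvex ℝ 0 Ω) (hp : p ∈ Ω) (hq : q ∈ Ω)
    {t : ℝ} (ht : t ∈ Icc (0 : ℝ) 1) : pathViaOrigin p q t ∈ Ω := by
  unfold pathViaOrigin
  split_ifs with h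
  · exact hΩ.smul_mem hp (by linarith) (by linarith [ht.1])
  · exact hΩ.smul_mem hq (by linarith) (by linarith [ht.2])

end PathViaOrigin

section Euclidean

variable {n : ℕ} {Ω : Set (EuclideanSpace ℝ (Fin n))} {p q : EuclideanSpace ℝ (Fin n)}

theorem isPathIn_pathViaOrigin (hΩ : StarConvex ℝ 0 Ω) (hp : p ∈ Ω) (hq : q ∈ Ω) :
    IsPathIn Ω p q (pathViaOrigin p q) := by
  refine ⟨⟨continuous_pathViaOrigin.continuousOn, {1 / 2}, fun t ht => ?_, fun t ht => ?_⟩,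
    fun t ht => pathViaOrigin_mem hΩ hp hq ht, by norm_num [pathViaOrigin],
    by norm_num [pathViaOrigin]⟩
  · rcases (show t ≠ 1 / 2 by simpa using ht.2).lt_or_gt with h | h
    · exact (hasDerivAt_pathViaOrigin_of_lt h).differentiableAt
    · exact (hasDerivAt_pathViaOrigin_of_gt h).differentiableAt
  · refine ContinuousAt.continuousWithinAt ?_
    rcases (show t ≠ 1 / 2 by simpa using ht.2).lt_or_gt with h | h
    · refine (continuousAt_const (y := (-2 : ℝ) • p)).congr ?_
      filter_upwards [Iio_mem_nhds h] with s hs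
      exact (hasDerivAt_pathViaOrigin_of_lt hs).deriv.symm
    · refine (continuousAt_const (y := (2 : ℝ) • q)).congr ?_
      filter_upwards [Ioi_mem_nhds h] with s hs
      exact (hasDerivAt_pathViaOrigin_of_gt hs).deriv.symm

theorem pathLen_pathViaOrigin {f : EuclideanSpace ℝ (Fin n) → ℝ} (hΩ : StarConvex ℝ 0 Ω)
    (hf : ContinuousOn f Ω) (hp : p ∈ Ω) (hq : q ∈ Ω) :
    pathLen f (pathViaOrigin p q) = radialLen f p + radialLen f q := by
  set F := fun t => f (pathViaOrigin p q t) * ‖deriv (pathViaOrigin p q) t‖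
  set G := fun (x : EuclideanSpace ℝ (Fin n)) (s : ℝ) => f (s • x) * ‖x‖
  have hF₁ : EqOn F (fun t => 2 * G p (1 - 2 * t)) (Ioo 0 (1 / 2)) := fun t ht => by
    simp only [F, G, (hasDerivAt_pathViaOrigin_of_lt ht.2).deriv, pathViaOrigin, if_pos ht.2.le,
      norm_smul]
    norm_num; ring
  have hF₂ : EqOn F (fun t => 2 * G q (2 * t - 1)) (Ioo (1 / 2) 1) := fun t ht => by
    simp only [F, G, (hasDerivAt_pathViaOrigin_of_gt ht.1).deriv, pathViaOrigin,
      if_neg (not_le.2 ht.1), norm_smul]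
    norm_num; ring
  have hG₁ : IntervalIntegrable (fun t => 2 * G p (1 - 2 * t)) volume 0 (1 / 2) := by
    refine ContinuousOn.intervalIntegrable_of_Icc (by norm_num) (continuousOn_const.mul ?_)
    refine (continuousOn_radialIntegrand hΩ hf hp).comp (by fun_prop) fun t ht => ?_
    constructor <;> linarith [ht.1, ht.2]
  have hG₂ : IntervalIntegrable (fun t => 2 * G q (2 * t - 1)) volume (1 / 2) 1 := by
    refine ContinuousOn.intervalIntegrable_of_Icc (by norm_num) (continuousOn_const.mul ?_)
    refine (continuousOn_radialIntegrand hΩ hf hq).comp (by fun_prop) fun t ht => ?_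
    constructor <;> linarith [ht.1, ht.2]
  have hIoo₁ : uIoo (0 : ℝ) (1 / 2) = Ioo 0 (1 / 2) := uIoo_of_le (by norm_num)
  have hIoo₂ : uIoo (1 / 2 : ℝ) 1 = Ioo (1 / 2) 1 := uIoo_of_le (by norm_num)
  unfold pathLen
  rw [← intervalIntegral.integral_add_adjacent_intervals
      (hG₁.congr_uIoo (hIoo₁ ▸ hF₁.symm)) (hG₂.congr_uIoo (hIoo₂ ▸ hF₂.symm)),
    intervalIntegral.integral_congr_Ioo_of_le (by norm_num) hF₁,
    intervalIntegral.integral_congr_Ioo_of_le (by norm_num) hF₂,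
    intervalIntegral.integral_const_mul, intervalIntegral.integral_const_mul,
    intervalIntegral.integral_comp_sub_mul (G p) two_ne_zero,
    intervalIntegral.integral_comp_mul_sub (G q) two_ne_zero]
  norm_num [radialLen, G]
  ring

end Euclidean

theorem confDist_le_six_area_blowup_example_general {n : ℕ}
    (α : ℝ) (hα : α < 1 / n)
    (f : ℕ → EuclideanSpace ℝ (Fin n) → ℝ)
    (hcont : ∀ j : ℕ, 3 ≤ j → ContinuousOn (f j) (Metric.closedBall 0 1))
    (hbound : ∀ j : ℕ, 3 ≤ j → ∀ x ∈ Metric.closedBall (0 : EuclideanSpace ℝ (Fin n)) 1,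
      1 ≤ f j x ∧ f j x ≤ (j : ℝ) ^ α)
    (hinner : ∀ j : ℕ, 3 ≤ j → ∀ x ∈ Metric.closedBall (0 : EuclideanSpace ℝ (Fin n)) 1,
      ‖x‖ ≤ 1 - 2 / (j : ℝ) → f j x = 1) :
    ∀ j : ℕ, 3 ≤ j →
      ∀ p ∈ Metric.closedBall (0 : EuclideanSpace ℝ (Fin n)) 1,
      ∀ q ∈ Metric.closedBall (0 : EuclideanSpace ℝ (Fin n)) 1,
        confDist (Metric.closedBall 0 1) (f j) p q ≤ 6 := by
  intro j hj p hp q hq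
  have hj₃ : (3 : ℝ) ≤ j := by exact_mod_cast hj
  have hball : StarConvex ℝ 0 (Metric.closedBall (0 : EuclideanSpace ℝ (Fin n)) 1) :=
    (convex_closedBall 0 1).starConvex (Metric.mem_closedBall_self zero_le_one)
  have hcollar : (j : ℝ) ^ α * (2 / j) ≤ 2 :=
    calc (j : ℝ) ^ α * (2 / j)
        ≤ j * (2 / j) := by
          gcongr
          exact Real.rpow_le_self_of_one_le (by linarith)
            (hα.le.trans (by simpa using Nat.cast_inv_le_one n))
      _ = 2 := by field_simp
  have hr₀ : 0 ≤ 1 - 2 / (j : ℝ) := by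
    rw [sub_nonneg, div_le_one (by positivity)]; linarith
  have hr₁ : 1 - 2 / (j : ℝ) ≤ 1 := sub_le_self _ (by positivity)
  have hradial : ∀ x ∈ Metric.closedBall (0 : EuclideanSpace ℝ (Fin n)) 1,
      radialLen (f j) x ≤ 3 := fun x hx => by
    have := radialLen_le (hcont j hj) (mem_closedBall_zero_iff.1 hx) (by positivity)
      hr₀ hr₁ (fun y hy => (hbound j hj y hy).2)
      (fun y hy => (hinner j hj y (Metric.closedBall_subset_closedBall hr₁ hy)
        (mem_closedBall_zero_iff.1 hy)).le)
    linarith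
  calc confDist (Metric.closedBall 0 1) (f j) p q
      ≤ ENNReal.ofReal (pathLen (f j) (pathViaOrigin p q)) :=
        confDist_le_pathLen (isPathIn_pathViaOrigin hball hp hq)
    _ ≤ ENNReal.ofReal 6 := by
        gcongr
        rw [pathLen_pathViaOrigin hball (hcont j hj) hp hq]
        linarith [hradial p hp, hradial q hq]
    _ = 6 := by norm_num

/-- Uniform diameter bound in the boundary-area blow-up example: for conformal factors `f_j`
on the closed unit ball equal to `j^α` on the collar `{‖x‖ ≥ 1 - 1/j}` and to `1` on
`{‖x‖ ≤ 1 - 2/j}` (with `0 < α < 1/n` and `1 ≤ f_j ≤ j^α`), the conformal distance between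
any two points of the ball is at most `6`. -/
theorem confDist_le_six_area_blowup_example {n : ℕ} (hn : 1 ≤ n)
    (α : ℝ) (hα0 : 0 < α) (hα : α < 1 / n)
    (f : ℕ → EuclideanSpace ℝ (Fin n) → ℝ)
    (hcont : ∀ j : ℕ, 3 ≤ j → ContinuousOn (f j) (Metric.closedBall 0 1))
    (hbound : ∀ j : ℕ, 3 ≤ j → ∀ x ∈ Metric.closedBall (0 : EuclideanSpace ℝ (Fin n)) 1,
      1 ≤ f j x ∧ f j x ≤ (j : ℝ) ^ α)
    (houter : ∀ j : ℕ, 3 ≤ j → ∀ x ∈ Metric.closedBall (0 : EuclideanSpace ℝ (Fin n)) 1,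
      1 - 1 / (j : ℝ) ≤ ‖x‖ → f j x = (j : ℝ) ^ α)
    (hinner : ∀ j : ℕ, 3 ≤ j → ∀ x ∈ Metric.closedBall (0 : EuclideanSpace ℝ (Fin n)) 1,
      ‖x‖ ≤ 1 - 2 / (j : ℝ) → f j x = 1) :
    ∀ j : ℕ, 3 ≤ j →
      ∀ p ∈ Metric.closedBall (0 : EuclideanSpace ℝ (Fin n)) 1,
      ∀ q ∈ Metric.closedBall (0 : EuclideanSpace ℝ (Fin n)) 1,
        confDist (Metric.closedBall 0 1) (f j) p q ≤ 6 :=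
  confDist_le_six_area_blowup_example_general α hα f hcont hbound hinner
end
end

section
/- For every integer n ≥ 1 there exists a sequence of functions h_j : [1,2] → ℝ, for integers j ≥ 1, such that each h_j is infinitely differentiable, nonincreasing, satisfies h_j(1) = j, h_j(2) = 1, h_j′(1) = h_j′(2) = 0, and 1 ≤ h_j(s) ≤ j for all s ∈ [1,2], and moreover (1/jⁿ)·∫₁² h_j(s)ⁿ s^{n−1} ds → 0 as j → ∞. -/
open Filter

/-- The cubic profile `g s = (2-s)^2 (2s-1)`, decreasing from `1` to `0` on `[1,2]`
with vanishing derivative at both endpoints. -/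
private def gq (s : ℝ) : ℝ := (2 - s) ^ 2 * (2 * s - 1)

private lemma gq_hasDerivAt (x : ℝ) :
    HasDerivAt gq (2 * (2 - x) ^ 1 * -1 * (2 * x - 1) + (2 - x) ^ 2 * 2) x := by
  have h1 : HasDerivAt (fun s : ℝ => (2 - s) ^ 2) (2 * (2 - x) ^ 1 * -1) x := by
    have := ((hasDerivAt_id x).const_sub 2).pow 2
    simpa [Pi.pow_def] using this
  have h2 : HasDerivAt (fun s : ℝ => 2 * s - 1) 2 x := by
    have := ((hasDerivAt_id x).const_mul 2).sub_const 1
    simpa using this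
  rw [show gq = fun s : ℝ => (2 - s) ^ 2 * (2 * s - 1) from rfl]
  simpa [Pi.mul_def] using h1.mul h2

private lemma gq_nonneg {s : ℝ} (h1 : 1 ≤ s) (h2 : s ≤ 2) : 0 ≤ gq s := by
  have : (0:ℝ) ≤ (2 - s) ^ 2 := sq_nonneg _
  have : (0:ℝ) ≤ 2 * s - 1 := by linarith
  unfold gq; positivity

private lemma gq_le_one_sub {s : ℝ} (h1 : 1 ≤ s) (h2 : s ≤ 2) : gq s ≤ 1 - (s - 1) ^ 2 := by
  unfold gq; nlinarith [sq_nonneg (s - 1)]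

private lemma gq_le_one {s : ℝ} (h1 : 1 ≤ s) (h2 : s ≤ 2) : gq s ≤ 1 := by
  have := gq_le_one_sub h1 h2
  nlinarith [sq_nonneg (s - 1)]

private lemma gq_anti {s t : ℝ} (hs : 1 ≤ s) (hst : s ≤ t) (ht : t ≤ 2) : gq t ≤ gq s := by
  unfold gq
  nlinarith [mul_nonneg (sub_nonneg.2 hst) (mul_nonneg (by linarith : (0:ℝ) ≤ s - 1)
      (by linarith : (0:ℝ) ≤ 2 - t)),
    mul_nonneg (sub_nonneg.2 hst) (mul_nonneg (by linarith : (0:ℝ) ≤ t - 1)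
      (by linarith : (0:ℝ) ≤ 2 - t)),
    mul_nonneg (sub_nonneg.2 hst) (mul_nonneg (by linarith : (0:ℝ) ≤ s - 1)
      (by linarith : (0:ℝ) ≤ 2 - s)),
    sq_nonneg (t - s), mul_nonneg (sub_nonneg.2 hst) (sq_nonneg (t - s))]

/-- Bernoulli-type bound: `(1-b)^m (1 + m b) ≤ 1` for `0 ≤ b ≤ 1`. -/
private lemma bernoulli_bound {b : ℝ} (hb0 : 0 ≤ b) (hb1 : b ≤ 1) (m : ℕ) :
    (1 - b) ^ m * (1 + m * b) ≤ 1 := by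
  have hA : 1 + (m : ℝ) * b ≤ (1 + b) ^ m := one_add_mul_le_pow (by linarith) m
  have hB : (1 - b) ^ m * (1 + b) ^ m ≤ 1 := by
    rw [← mul_pow]
    apply pow_le_one₀ (by nlinarith) (by nlinarith)
  have h0 : (0:ℝ) ≤ (1 - b) ^ m := pow_nonneg (by linarith) m
  nlinarith [mul_le_mul_of_nonneg_left hA h0]

/-- Construction of the neck profile functions in the bubbling example: for every `n ≥ 1`
there are smooth nonincreasing functions `h_j : [1,2] → ℝ` with `h_j(1) = j`, `h_j(2) = 1`,
`h_j'(1) = h_j'(2) = 0`, `1 ≤ h_j ≤ j` on `[1,2]`, and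
`(1/jⁿ) ∫₁² h_j(s)ⁿ s^{n-1} ds → 0`. -/
theorem exists_neck_profile_functions (n : ℕ) (hn : 1 ≤ n) :
    ∃ h : ℕ → ℝ → ℝ,
      (∀ j : ℕ, 1 ≤ j →
        ContDiff ℝ (⊤ : ℕ∞) (h j) ∧
        AntitoneOn (h j) (Set.Icc 1 2) ∧
        h j 1 = (j : ℝ) ∧
        h j 2 = 1 ∧
        deriv (h j) 1 = 0 ∧
        deriv (h j) 2 = 0 ∧
        (∀ s ∈ Set.Icc (1 : ℝ) 2, 1 ≤ h j s ∧ h j s ≤ (j : ℝ))) ∧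
      Tendsto
        (fun j : ℕ => (1 / (j : ℝ) ^ n) * ∫ s in (1 : ℝ)..2, (h j s) ^ n * s ^ (n - 1))
        atTop (nhds 0) := by
  set h : ℕ → ℝ → ℝ :=
    fun j s => 1 + ((j : ℝ) - 1) * (gq s) ^ (j ^ 3) with hh
  -- bounds on [1,2]
  have hb1 : ∀ j : ℕ, 1 ≤ j → ∀ s ∈ Set.Icc (1:ℝ) 2, (1 : ℝ) ≤ h j s := by
    intro j hj s hs
    have hj1 : (1 : ℝ) ≤ j := by exact_mod_cast hj
    have hg0 : 0 ≤ gq s := gq_nonneg hs.1 hs.2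
    have : (0:ℝ) ≤ ((j:ℝ) - 1) * (gq s) ^ (j ^ 3) :=
      mul_nonneg (by linarith) (pow_nonneg hg0 _)
    simp only [hh]; linarith
  have hb2 : ∀ j : ℕ, 1 ≤ j → ∀ s ∈ Set.Icc (1:ℝ) 2, h j s ≤ (j : ℝ) := by
    intro j hj s hs
    have hj1 : (1 : ℝ) ≤ j := by exact_mod_cast hj
    have hg0 : 0 ≤ gq s := gq_nonneg hs.1 hs.2
    have hg1 : gq s ^ (j ^ 3) ≤ 1 := pow_le_one₀ hg0 (gq_le_one hs.1 hs.2)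
    have : ((j:ℝ) - 1) * (gq s) ^ (j ^ 3) ≤ ((j:ℝ) - 1) * 1 :=
      mul_le_mul_of_nonneg_left hg1 (by linarith)
    simp only [hh]; linarith
  have hcont : ∀ j : ℕ, ContDiff ℝ (⊤ : ℕ∞) (h j) := by
    intro j
    apply contDiff_const.add
    apply contDiff_const.mul
    apply ContDiff.pow
    exact ((contDiff_const.sub contDiff_id).pow 2).mul
      ((contDiff_const.mul contDiff_id).sub contDiff_const)
  have hderiv : ∀ j : ℕ, ∀ x : ℝ,
      HasDerivAt (h j) (((j : ℝ) - 1) * ((j ^ 3 : ℕ) * (gq x) ^ (j ^ 3 - 1)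
        * (2 * (2 - x) ^ 1 * -1 * (2 * x - 1) + (2 - x) ^ 2 * 2))) x := by
    intro j x
    exact (((gq_hasDerivAt x).pow (j ^ 3)).const_mul ((j : ℝ) - 1)).const_add 1
  refine ⟨h, fun j hj => ?_, ?_⟩
  · have hj1 : (1 : ℝ) ≤ j := by exact_mod_cast hj
    refine ⟨hcont j, ?_, ?_, ?_, ?_, ?_, fun s hs => ⟨hb1 j hj s hs, hb2 j hj s hs⟩⟩
    · -- antitone
      intro s hs t ht hst
      have hg : gq t ≤ gq s := gq_anti hs.1 hst ht.2
      have hg0 : 0 ≤ gq t := gq_nonneg (le_trans hs.1 hst) ht.2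
      have hp : gq t ^ (j ^ 3) ≤ gq s ^ (j ^ 3) := pow_le_pow_left₀ hg0 hg _
      have := mul_le_mul_of_nonneg_left hp (by linarith : (0:ℝ) ≤ (j:ℝ) - 1)
      simp only [hh]; linarith
    · -- value at 1
      have : gq 1 = 1 := by unfold gq; norm_num
      simp only [hh, this, one_pow]; ring
    · -- value at 2
      have : gq 2 = 0 := by unfold gq; norm_num
      simp only [hh, this]
      rw [zero_pow (by positivity : j ^ 3 ≠ 0)]
      ring
    · -- deriv at 1
      rw [(hderiv j 1).deriv]
      norm_num
    · -- deriv at 2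
      rw [(hderiv j 2).deriv]
      norm_num
  · -- the limit
    have key : ∀ j : ℕ, 1 ≤ j →
        (1 / (j : ℝ) ^ n) * (∫ s in (1 : ℝ)..2, (h j s) ^ n * s ^ (n - 1))
          ≤ 2 ^ (n - 1) * (1 / (j : ℝ)) + 2 ^ (n - 1) * 2 ^ n * (1 / (j : ℝ) ^ n) ∧
        0 ≤ (1 / (j : ℝ) ^ n) * (∫ s in (1 : ℝ)..2, (h j s) ^ n * s ^ (n - 1)) := by
      intro j hj
      have hj1 : (1 : ℝ) ≤ j := by exact_mod_cast hj
      have hj0 : (0 : ℝ) < j := by linarith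
      have contf : Continuous fun s : ℝ => (h j s) ^ n * s ^ (n - 1) :=
        (((hcont j).continuous).pow n).mul (continuous_pow (n - 1))
      set m : ℝ := 1 + 1 / j with hm
      have hm1 : (1 : ℝ) ≤ m := by
        have : (0:ℝ) < 1 / j := by positivity
        simp only [hm]; linarith
      have hm2 : m ≤ 2 := by
        have : 1 / (j : ℝ) ≤ 1 := by
          rw [div_le_one hj0]; exact hj1
        simp only [hm]; linarith
      have hint1 : IntervalIntegrable (fun s : ℝ => (h j s) ^ n * s ^ (n - 1))
          MeasureTheory.volume 1 m := contf.intervalIntegrable _ _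
      have hint2 : IntervalIntegrable (fun s : ℝ => (h j s) ^ n * s ^ (n - 1))
          MeasureTheory.volume m 2 := contf.intervalIntegrable _ _
      have hsplit : (∫ s in (1 : ℝ)..2, (h j s) ^ n * s ^ (n - 1))
          = (∫ s in (1 : ℝ)..m, (h j s) ^ n * s ^ (n - 1))
            + ∫ s in m..2, (h j s) ^ n * s ^ (n - 1) :=
        (intervalIntegral.integral_add_adjacent_intervals hint1 hint2).symm
      have hB1 : (∫ s in (1 : ℝ)..m, (h j s) ^ n * s ^ (n - 1))
          ≤ (m - 1) * ((j : ℝ) ^ n * 2 ^ (n - 1)) := by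
        have := intervalIntegral.integral_mono_on hm1 hint1
          (intervalIntegrable_const
            (c := (j : ℝ) ^ n * 2 ^ (n - 1))) ?_
        · calc (∫ s in (1 : ℝ)..m, (h j s) ^ n * s ^ (n - 1))
              ≤ ∫ _ in (1 : ℝ)..m, (j : ℝ) ^ n * 2 ^ (n - 1) := this
            _ = (m - 1) * ((j : ℝ) ^ n * 2 ^ (n - 1)) := by
                rw [intervalIntegral.integral_const, smul_eq_mul]
        · intro s hs
          obtain ⟨hs1, hs2⟩ := hs
          have hs2' : s ≤ 2 := le_trans hs2 hm2
          have h0 : (0 : ℝ) ≤ h j s := le_trans zero_le_one (hb1 j hj s ⟨hs1, hs2'⟩)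
          apply mul_le_mul
          · exact pow_le_pow_left₀ h0 (hb2 j hj s ⟨hs1, hs2'⟩) n
          · exact pow_le_pow_left₀ (by linarith) hs2' (n - 1)
          · positivity
          · positivity
      have hB2 : (∫ s in m..2, (h j s) ^ n * s ^ (n - 1)) ≤ (2 - m) * (2 ^ n * 2 ^ (n - 1)) := by
        have := intervalIntegral.integral_mono_on hm2 hint2
          (intervalIntegrable_const (c := (2 : ℝ) ^ n * 2 ^ (n - 1))) ?_
        · calc (∫ s in m..2, (h j s) ^ n * s ^ (n - 1))
              ≤ ∫ _ in m..2, (2 : ℝ) ^ n * 2 ^ (n - 1) := this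
            _ = (2 - m) * (2 ^ n * 2 ^ (n - 1)) := by
                rw [intervalIntegral.integral_const, smul_eq_mul]
        · intro s hs
          obtain ⟨hs1, hs2⟩ := hs
          have hs1' : (1:ℝ) ≤ s := le_trans hm1 hs1
          -- on [m,2] we have h j s ≤ 2
          have hval : h j s ≤ 2 := by
            have hgle : gq s ≤ 1 - 1 / (j:ℝ) ^ 2 := by
              have h1 : gq s ≤ 1 - (s - 1) ^ 2 := gq_le_one_sub hs1' hs2
              have h2 : (1 / (j:ℝ)) ^ 2 ≤ (s - 1) ^ 2 := by
                apply pow_le_pow_left₀ (by positivity)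
                simp only [hm] at hs1; linarith
              rw [one_div, inv_pow, ← one_div] at h2
              linarith
            have hg0 : 0 ≤ gq s := gq_nonneg hs1' hs2
            have hb : (0:ℝ) ≤ 1 / (j:ℝ) ^ 2 := by positivity
            have hb' : 1 / (j:ℝ) ^ 2 ≤ 1 := by
              rw [div_le_one (by positivity)]
              nlinarith
            have hp : gq s ^ (j ^ 3) ≤ (1 - 1 / (j:ℝ) ^ 2) ^ (j ^ 3) :=
              pow_le_pow_left₀ hg0 hgle _
            have hbern := bernoulli_bound hb hb' (j ^ 3)
            have hcast : ((j ^ 3 : ℕ) : ℝ) * (1 / (j:ℝ) ^ 2) = (j : ℝ) := by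
              push_cast
              field_simp
            rw [hcast] at hbern
            -- (1 - b)^m * (1 + j) ≤ 1
            have hY0 : (0:ℝ) ≤ (1 - 1 / (j:ℝ) ^ 2) ^ (j ^ 3) :=
              pow_nonneg (by linarith) _
            have hfinal : ((j:ℝ) - 1) * gq s ^ (j ^ 3) ≤ 1 := by
              have hX0 : (0:ℝ) ≤ gq s ^ (j ^ 3) := pow_nonneg hg0 _
              nlinarith
            simp only [hh]; linarith
          have h0 : (0 : ℝ) ≤ h j s := le_trans zero_le_one (hb1 j hj s ⟨hs1', hs2⟩)
          apply mul_le_mul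
          · exact pow_le_pow_left₀ h0 hval n
          · exact pow_le_pow_left₀ (by linarith) hs2 (n - 1)
          · positivity
          · positivity
      constructor
      · have hI : (∫ s in (1 : ℝ)..2, (h j s) ^ n * s ^ (n - 1))
            ≤ (1 / j) * ((j : ℝ) ^ n * 2 ^ (n - 1)) + 2 ^ n * 2 ^ (n - 1) := by
          rw [hsplit]
          have hm1' : m - 1 = 1 / (j : ℝ) := by simp only [hm]; ring
          have h2m : 2 - m ≤ 1 := by linarith
          have hpos : (0:ℝ) ≤ (2:ℝ) ^ n * (2:ℝ) ^ (n-1) := by positivity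
          rw [hm1'] at hB1
          nlinarith [hB1, hB2, mul_le_mul_of_nonneg_right h2m hpos]
        have := mul_le_mul_of_nonneg_left hI (le_of_lt (by positivity :
          (0 : ℝ) < 1 / (j : ℝ) ^ n))
        calc (1 / (j : ℝ) ^ n) * (∫ s in (1 : ℝ)..2, (h j s) ^ n * s ^ (n - 1))
            ≤ (1 / (j : ℝ) ^ n) * ((1 / j) * ((j : ℝ) ^ n * 2 ^ (n - 1)) + 2 ^ n * 2 ^ (n - 1)) :=
              this
          _ = 2 ^ (n - 1) * (1 / (j : ℝ)) + 2 ^ (n - 1) * 2 ^ n * (1 / (j : ℝ) ^ n) := by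
              field_simp
      · apply mul_nonneg (by positivity)
        apply intervalIntegral.integral_nonneg (by norm_num : (1:ℝ) ≤ 2)
        intro s hs
        have h0 : (0 : ℝ) ≤ h j s := le_trans zero_le_one (hb1 j hj s hs)
        have : (0:ℝ) ≤ s := by linarith [hs.1]
        positivity
    have gt0 : Tendsto (fun j : ℕ =>
        (2:ℝ) ^ (n - 1) * (1 / (j : ℝ)) + 2 ^ (n - 1) * 2 ^ n * (1 / (j : ℝ) ^ n))
        atTop (nhds 0) := by
      have t1 : Tendsto (fun j : ℕ => 1 / (j : ℝ)) atTop (nhds 0) :=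
        tendsto_one_div_atTop_nhds_zero_nat
      have t2 : Tendsto (fun j : ℕ => 1 / (j : ℝ) ^ n) atTop (nhds 0) := by
        have := t1.pow n
        rw [zero_pow (by omega : n ≠ 0)] at this
        simpa [one_div, inv_pow] using this
      have := (t1.const_mul ((2:ℝ) ^ (n - 1))).add
        (t2.const_mul ((2:ℝ) ^ (n - 1) * 2 ^ n))
      simpa using this
    apply tendsto_of_tendsto_of_tendsto_of_le_of_le' tendsto_const_nhds gt0
    · filter_upwards [eventually_ge_atTop 1] with j hj
      exact (key j hj).2
    · filter_upwards [eventually_ge_atTop 1] with j hj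
      exact (key j hj).1
end
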